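/- arXiv:math/0609569 — 2 statements merged into one kernel-verified Lean document; each statement's English description precedes it below -/
import Mathlib

section
/- Let f : M → N be a linear map between inner product spaces of dimension n with singular values 0 ≤ s₁ ≤ ... ≤ s_n. Then the operator norm of the k-th exterior power Λᵏf equals the product s_{n-k+1} ⋯ s_n of the k largest singular values. -/
/-!
Write an orthonormal `k`-tuple `u` in the orthonormal basis `v` as a matrix `C` with orthonormal
columns, `Cᵀ C = 1`. Since `f` scales `v i` to `s i • w i`, the Gram matrix of `f ∘ u` is
`(D C)ᵀ (D C)` with `D = diag s`. By Cauchy–Binet its determinant is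
`∑ₑ det (C_e)² ∏ⱼ s (e j)²` over the increasing `k`-tuples `e`; each product is at most the square
of the product of the `k` largest singular values, and `∑ₑ det (C_e)² = det (Cᵀ C) = 1`. The
bound is attained by the top `k` vectors of `v`.
-/

open Finset Matrix Equiv Function

open Classical in
theorem Finset.sum_filter_injective_eq_sum_strictMono_sum_perm {k : ℕ} {α β : Type*}
    [Fintype α] [LinearOrder α] [AddCommMonoid β] (F : (Fin k → α) → β) :
    ∑ p ∈ univ.filter Injective, F p =
      ∑ e ∈ univ.filter StrictMono, ∑ τ : Perm (Fin k), F (e ∘ τ) := by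
  rw [← sum_product']
  symm
  refine sum_nbij (fun x => x.1 ∘ x.2) ?_ ?_ ?_ fun _ _ => rfl
  · rintro ⟨e, τ⟩ h
    simp only [mem_product, mem_filter, mem_univ, true_and, and_true] at h ⊢
    exact h.injective.comp τ.injective
  · rintro ⟨e, τ⟩ he ⟨e', τ'⟩ he' h
    simp only [coe_product, coe_filter, mem_univ, true_and, coe_univ, Set.mem_prod,
      Set.mem_ofPred_eq, Set.mem_univ, and_true] at he he' h
    obtain rfl : e = e' := (he.range_inj he').1 <| by
      rw [← EquivLike.range_comp e τ, ← EquivLike.range_comp e' τ', h]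
    exact Prod.ext rfl <| Equiv.ext fun i => he.injective (congrFun h i)
  · intro p hp
    simp only [coe_filter, mem_univ, true_and, Set.mem_ofPred_eq] at hp
    refine ⟨(p ∘ Tuple.sort p, (Tuple.sort p)⁻¹), ?_, ?_⟩
    · simpa using (Tuple.monotone_sort p).strictMono_of_injective
        (hp.comp (Tuple.sort p).injective)
    · ext i
      simp

theorem Matrix.det_mul_eq_sum_det_submatrix_mul_prod {m ι R : Type*} [Fintype m] [DecidableEq m]
    [Fintype ι] [DecidableEq ι] [CommRing R] (A : Matrix m ι R) (B : Matrix ι m R) :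
    (A * B).det = ∑ p : m → ι, (A.submatrix id p).det * ∏ i, B (p i) i := by
  calc (A * B).det
      = ∑ σ : Perm m, ∑ p : m → ι, Perm.sign σ • ∏ i, A (σ i) (p i) * B (p i) i := by
        simp only [det_apply, mul_apply, prod_univ_sum, Fintype.piFinset_univ, smul_sum]
    _ = ∑ p : m → ι, (A.submatrix id p).det * ∏ i, B (p i) i := by
        rw [sum_comm]
        refine sum_congr rfl fun p _ => ?_
        simp only [det_apply, sum_mul, prod_mul_distrib, smul_mul_assoc]
        rfl

open Classical in
theorem Matrix.det_mul_eq_sum_strictMono {k : ℕ} {ι R : Type*} [Fintype ι] [LinearOrder ι]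
    [CommRing R] (A : Matrix (Fin k) ι R) (B : Matrix ι (Fin k) R) :
    (A * B).det =
      ∑ e ∈ univ.filter StrictMono, (A.submatrix id e).det * (B.submatrix e id).det := by
  rw [det_mul_eq_sum_det_submatrix_mul_prod, ← sum_filter_add_sum_filter_not univ Injective,
    sum_eq_zero (s := univ.filter (¬ Injective ·)), add_zero,
    sum_filter_injective_eq_sum_strictMono_sum_perm]
  · refine sum_congr rfl fun e _ => ?_
    rw [det_apply (B.submatrix e id), mul_sum]
    refine sum_congr rfl fun τ _ => ?_
    rw [show A.submatrix id (e ∘ τ) = (A.submatrix id e).submatrix id τ from rfl, det_permute',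
      Units.smul_def]
    simp only [submatrix_apply, id, comp_def, zsmul_eq_mul]
    ring
  · intro p hp
    obtain ⟨i, j, hij, hne⟩ : ∃ i j, p i = p j ∧ i ≠ j := by simpa [Injective] using hp
    rw [det_zero_of_column_eq hne fun _ => by simp [hij], zero_mul]

open Classical in
theorem Matrix.det_transpose_mul_self_eq_sum_sq {k : ℕ} {ι R : Type*} [Fintype ι] [LinearOrder ι]
    [CommRing R] (C : Matrix ι (Fin k) R) :
    (Cᵀ * C).det = ∑ e ∈ univ.filter StrictMono, (C.submatrix e id).det ^ 2 := by
  rw [det_mul_eq_sum_strictMono]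
  refine sum_congr rfl fun e _ => ?_
  rw [← transpose_submatrix, det_transpose, sq]

theorem Fin.strictMono_le_natAdd {m k : ℕ} {e : Fin k → Fin (m + k)} (he : StrictMono e)
    (j : Fin k) : e j ≤ Fin.natAdd m j := by
  have hcard := card_le_card (s := (Ici j).map ⟨e, he.injective⟩) (t := Ici (e j)) <| by
    intro x hx
    obtain ⟨i, hi, rfl⟩ := mem_map.mp hx
    exact mem_Ici.mpr (he.monotone (mem_Ici.mp hi))
  rw [card_map, Fin.card_Ici, Fin.card_Ici] at hcard
  rw [Fin.le_def, Fin.val_natAdd]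
  have := (e j).isLt
  omega

theorem Monotone.prod_comp_strictMono_le {m k : ℕ} {s : Fin (m + k) → ℝ} (hs0 : ∀ i, 0 ≤ s i)
    (hs : Monotone s) {e : Fin k → Fin (m + k)} (he : StrictMono e) :
    ∏ j, s (e j) ≤ ∏ j, s (Fin.natAdd m j) :=
  prod_le_prod (fun _ _ => hs0 _) fun j _ => hs (Fin.strictMono_le_natAdd he j)

theorem Fin.prod_filter_le_eq_prod_natAdd {M : Type*} [CommMonoid M] {m k : ℕ}
    (s : Fin (m + k) → M) :
    ∏ i ∈ univ.filter (fun i : Fin (m + k) => m ≤ (i : ℕ)), s i = ∏ j, s (Fin.natAdd m j) := by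
  rw [prod_filter, Fin.prod_univ_add, prod_eq_one fun i _ => if_neg (by simp), one_mul]
  simp

theorem Matrix.det_transpose_mul_self_diagonal_mul_le {m k : ℕ}
    (C : Matrix (Fin (m + k)) (Fin k) ℝ) (hC : Cᵀ * C = 1) {s : Fin (m + k) → ℝ}
    (hs0 : ∀ i, 0 ≤ s i) (hs : Monotone s) :
    ((diagonal s * C)ᵀ * (diagonal s * C)).det ≤ (∏ j, s (Fin.natAdd m j)) ^ 2 := by
  classical
  have hminor : ∀ e : Fin k → Fin (m + k),
      ((diagonal s * C).submatrix e id).det = (∏ j, s (e j)) * (C.submatrix e id).det := by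
    intro e
    rw [show (diagonal s * C).submatrix e id = diagonal (s ∘ e) * C.submatrix e id by
      ext; simp [diagonal_mul], det_mul, det_diagonal]
    rfl
  calc ((diagonal s * C)ᵀ * (diagonal s * C)).det
      = ∑ e ∈ univ.filter StrictMono, (C.submatrix e id).det ^ 2 * (∏ j, s (e j)) ^ 2 := by
        rw [det_transpose_mul_self_eq_sum_sq]
        exact sum_congr rfl fun e _ => by rw [hminor, mul_pow, mul_comm]
    _ ≤ ∑ e ∈ univ.filter StrictMono, (C.submatrix e id).det ^ 2 *
          (∏ j, s (Fin.natAdd m j)) ^ 2 := by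
        refine sum_le_sum fun e he => mul_le_mul_of_nonneg_left ?_ (sq_nonneg _)
        exact pow_le_pow_left₀ (prod_nonneg fun _ _ => hs0 _)
          (hs.prod_comp_strictMono_le hs0 (mem_filter.mp he).2) 2
    _ = (∏ j, s (Fin.natAdd m j)) ^ 2 := by
        rw [← sum_mul, ← det_transpose_mul_self_eq_sum_sq, hC, det_one, one_mul]

theorem Orthonormal.gram_sum_smul {𝕜 E ι m : Type*} [RCLike 𝕜] [NormedAddCommGroup E]
    [InnerProductSpace 𝕜 E] [Fintype ι] {w : ι → E} (hw : Orthonormal 𝕜 w)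
    (D : Matrix ι m 𝕜) : gram 𝕜 (fun i => ∑ l, D l i • w l) = Dᴴ * D := by
  ext i j
  simp [gram_apply, hw.inner_sum, mul_apply]

theorem Orthonormal.gram_smul {𝕜 E ι : Type*} [RCLike 𝕜] [NormedAddCommGroup E]
    [InnerProductSpace 𝕜 E] [DecidableEq ι] {w : ι → E} (hw : Orthonormal 𝕜 w) (c : ι → 𝕜) :
    gram 𝕜 (fun i => c i • w i) = diagonal fun i => star (c i) * c i := by
  ext i j
  simp only [gram_apply, inner_smul_left, inner_smul_right, orthonormal_iff_ite.mp hw,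
    diagonal_apply]
  split_ifs with h
  · subst h; simp [mul_comm]
  · simp

theorem LinearMap.det_gram_comp_le_sq_prod {m k : ℕ} {M N : Type*} [NormedAddCommGroup M]
    [InnerProductSpace ℝ M] [NormedAddCommGroup N] [InnerProductSpace ℝ N]
    (b : OrthonormalBasis (Fin (m + k)) ℝ M) {w : Fin (m + k) → N} (hw : Orthonormal ℝ w)
    (f : M →ₗ[ℝ] N) {s : Fin (m + k) → ℝ} (hs0 : ∀ i, 0 ≤ s i) (hs : Monotone s)
    (hsvd : ∀ i, f (b i) = s i • w i) {u : Fin k → M} (hu : Orthonormal ℝ u) :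
    (gram ℝ (f ∘ u)).det ≤ (∏ j, s (Fin.natAdd m j)) ^ 2 := by
  set C : Matrix (Fin (m + k)) (Fin k) ℝ := of fun l i => b.repr (u i) l
  have hu_eq : u = fun i => ∑ l, C l i • b l := funext fun i => (b.sum_repr (u i)).symm
  have hfu : f ∘ u = fun i => ∑ l, (diagonal s * C) l i • w l := by
    ext i
    simp [hu_eq, hsvd, smul_smul, diagonal_mul, mul_comm]
  have hC : Cᵀ * C = 1 := by
    rw [← conjTranspose_eq_transpose_of_trivial, ← b.orthonormal.gram_sum_smul, ← hu_eq,
      gram_eq_one_iff_orthonormal.mpr hu]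
  rw [hfu, hw.gram_sum_smul, conjTranspose_eq_transpose_of_trivial]
  exact det_transpose_mul_self_diagonal_mul_le C hC hs0 hs

theorem width_volume_stmt0_general {n k : ℕ} (hk1 : 1 ≤ k) (hkn : k ≤ n)
    {M N : Type*} [NormedAddCommGroup M] [InnerProductSpace ℝ M]
    [NormedAddCommGroup N] [InnerProductSpace ℝ N]
    (hM : Module.finrank ℝ M = n)
    (f : M →ₗ[ℝ] N) (s : Fin n → ℝ) (hs0 : ∀ i, 0 ≤ s i) (hsmono : Monotone s)
    (v : Fin n → M) (w : Fin n → N) (hv : Orthonormal ℝ v) (hw : Orthonormal ℝ w)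
    (hsvd : ∀ i, f (v i) = s i • w i) :
    IsGreatest {x : ℝ | ∃ u : Fin k → M, Orthonormal ℝ u ∧
        x = Real.sqrt (Matrix.det (Matrix.of fun i j : Fin k => (inner ℝ (f (u i)) (f (u j)) : ℝ)))}
      (∏ i ∈ Finset.univ.filter (fun i : Fin n => n - k ≤ (i : ℕ)), s i) := by
  obtain ⟨m, rfl⟩ : ∃ m, n = m + k := ⟨n - k, by omega⟩
  have : FiniteDimensional ℝ M := .of_finrank_pos (by omega)
  let b := OrthonormalBasis.mk hv
    (hv.linearIndependent.span_eq_top_of_card_eq_finrank' (by simp [hM])).ge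
  have hP0 : 0 ≤ ∏ j, s (Fin.natAdd m j) := prod_nonneg fun _ _ => hs0 _
  rw [Nat.add_sub_cancel, Fin.prod_filter_le_eq_prod_natAdd]
  refine ⟨⟨v ∘ Fin.natAdd m, hv.comp _ (Fin.natAdd_injective _ _), ?_⟩, ?_⟩
  · have hgram : gram ℝ (fun j => f (v (Fin.natAdd m j))) =
        diagonal fun j => s (Fin.natAdd m j) * s (Fin.natAdd m j) := by
      simpa [hsvd] using
        (hw.comp _ (Fin.natAdd_injective _ _)).gram_smul fun j => s (Fin.natAdd m j)
    change _ = √(gram ℝ fun j => f (v (Fin.natAdd m j))).det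
    rw [hgram, det_diagonal, prod_mul_distrib, Real.sqrt_mul_self hP0]
  · rintro _ ⟨u, hu, rfl⟩
    refine Real.sqrt_le_iff.mpr ⟨hP0, ?_⟩
    exact (f.det_gram_comp_le_sq_prod b hw hs0 hsmono (by simpa [b] using hsvd) hu)

/-- The operator norm of the k-th exterior power of a linear map `f` between
`n`-dimensional real inner product spaces equals the product of its `k` largest
singular values.  The norm of `Λᵏf` is expressed as the greatest value of
`√ det (⟪f uᵢ, f uⱼ⟫)` over orthonormal `k`-tuples `u`, i.e. the greatest norm of the
image of a unit simple `k`-vector. -/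
theorem width_volume_stmt0 {n k : ℕ} (hk1 : 1 ≤ k) (hkn : k ≤ n)
    {M N : Type*} [NormedAddCommGroup M] [InnerProductSpace ℝ M]
    [NormedAddCommGroup N] [InnerProductSpace ℝ N]
    (hM : Module.finrank ℝ M = n) (hN : Module.finrank ℝ N = n)
    (f : M →ₗ[ℝ] N) (s : Fin n → ℝ) (hs0 : ∀ i, 0 ≤ s i) (hsmono : Monotone s)
    (v : Fin n → M) (w : Fin n → N) (hv : Orthonormal ℝ v) (hw : Orthonormal ℝ w)
    (hsvd : ∀ i, f (v i) = s i • w i) :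
    IsGreatest {x : ℝ | ∃ u : Fin k → M, Orthonormal ℝ u ∧
        x = Real.sqrt (Matrix.det (Matrix.of fun i j : Fin k => (inner ℝ (f (u i)) (f (u j)) : ℝ)))}
      (∏ i ∈ Finset.univ.filter (fun i : Fin n => n - k ≤ (i : ℕ)), s i) :=
  width_volume_stmt0_general hk1 hkn hM f s hs0 hsmono v w hv hw hsvd
end

section
/- Let n ≥ 2 and let R, S be n-dimensional rectangles with side lengths R₁ ≤ ... ≤ R_n and S₁ ≤ ... ≤ S_n. If L : ℝⁿ → ℝⁿ is a linear diffeomorphism mapping R onto S, then L maps each hyperface of R onto a hyperface of S, and the (n−1)-dilation of L (the product of the n−1 largest singular values of L) is at least the ratio (area of image face)/(area of face) for every hyperface of R. -/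
/-!
The functional `y ↦ (L⁻¹ y) i` maps `S` onto `[0, R i]`. Take a coordinate `a` in which it has a
positive coefficient: pushing a point of `S` up in coordinate `a` shows that `L` maps the face
`x i = R i` into the face `y a = S a`, so `x ↦ (L x) a` is constant on that face and hence a
multiple of `x i`. Therefore `(L⁻¹ y) i = c * y a` with `c > 0`, and `L` maps the faces `x i = 0`,
`x i = R i` onto the faces `y a = 0`, `y a = S a`.

For the areas, `|det L| = ∏ s` gives `s 0 * P * ∏ R = ∏ S`, where `P` is the product of the
other singular values. The point `S a • e a` has a preimage with `i`-th coordinate `R i`, so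
`s 0 * R i ≤ S a`, and dividing leaves `∏_{m ≠ a} S m ≤ P * ∏_{m ≠ i} R m`. A face is isometric to
an `(n-1)`-dimensional box, on which `μH[n-1]` is a fixed multiple of the volume.
-/

open MeasureTheory ENNReal

open scoped RealInnerProductSpace

section SingularValues

variable {ι E F : Type*} [Fintype ι] [NormedAddCommGroup E] [InnerProductSpace ℝ E]
  [NormedAddCommGroup F] [InnerProductSpace ℝ F]

theorem mul_norm_le_norm_apply_of_apply_eq_smul (T : E →ₗ[ℝ] F) (v : OrthonormalBasis ι ℝ E)
    {w : ι → F} (hw : Orthonormal ℝ w) {s : ι → ℝ} (hT : ∀ i, T (v i) = s i • w i) {σ : ℝ}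
    (hσs : ∀ i, σ ≤ |s i|) (hσ : 0 ≤ σ) (x : E) : σ * ‖x‖ ≤ ‖T x‖ := by
  have hTx : T x = ∑ i, (⟪v i, x⟫ * s i) • w i := by
    conv_lhs => rw [← v.sum_repr' x]
    simp [map_sum, hT, smul_smul]
  have hsq : ‖T x‖ ^ 2 = ∑ i, (⟪v i, x⟫ * s i) ^ 2 := by
    rw [← real_inner_self_eq_norm_sq, hTx, hw.inner_sum]
    simp [sq]
  refine le_of_pow_le_pow_left₀ two_ne_zero (norm_nonneg _) ?_
  rw [hsq, mul_pow, ← v.sum_sq_inner_right x, Finset.mul_sum]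
  gcongr with i
  rw [mul_pow, mul_comm, ← sq_abs (s i)]
  gcongr
  exact hσs i

theorem abs_det_eq_prod_abs_of_apply_eq_smul [DecidableEq ι] (T : E →ₗ[ℝ] E)
    (v w : OrthonormalBasis ι ℝ E) {s : ι → ℝ} (hT : ∀ i, T (v i) = s i • w i) :
    |LinearMap.det T| = ∏ i, |s i| := by
  have h := w.toBasis.det_comp T v
  have hTv : T ∘ v = fun i => s i • w i := funext hT
  rw [hTv, AlternatingMap.map_smul_univ] at h
  have hwv : |w.toBasis.det v| = 1 := by
    rcases w.det_to_matrix_orthonormalBasis_real v with h | h <;> simp [h]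
  have hww : w.toBasis.det w = 1 := by simpa using w.toBasis.det_self
  simpa [Finset.abs_prod, abs_mul, hwv, hww] using (congrArg abs h).symm

theorem Orthonormal.exists_orthonormalBasis_coe_eq [FiniteDimensional ℝ E] {v : ι → E}
    (hv : Orthonormal ℝ v) (hcard : Fintype.card ι = Module.finrank ℝ E) :
    ∃ b : OrthonormalBasis ι ℝ E, ⇑b = v :=
  ⟨.mk hv (hv.linearIndependent.span_eq_top_of_card_eq_finrank' hcard).ge,
    OrthonormalBasis.coe_mk _ _⟩

end SingularValues

section Box

variable {ι : Type*}

def box (r : ι → ℝ) : Set (EuclideanSpace ℝ ι) := {x | ∀ m, x m ∈ Set.Icc 0 (r m)}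

def boxFace (r : ι → ℝ) (i : ι) (e : ℝ) : Set (EuclideanSpace ℝ ι) := {x ∈ box r | x i = e}

variable {r s : ι → ℝ} {L : EuclideanSpace ℝ ι ≃ₗ[ℝ] EuclideanSpace ℝ ι}

theorem symm_mem_box_of_image_box_eq (hL : L '' box r = box s) {y : EuclideanSpace ℝ ι}
    (hy : y ∈ box s) : L.symm y ∈ box r := by
  rwa [← hL, L.image_eq_preimage_symm] at hy

theorem image_boxFace_eq (hL : L '' box r = box s) (i : ι) (e : ℝ) :
    L '' boxFace r i e = {y ∈ box s | L.symm y i = e} := by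
  rw [L.image_eq_preimage_symm, ← hL, L.image_eq_preimage_symm]
  rfl

theorem image_boxFace_eq_boxFace (hL : L '' box r = box s) {i j : ι} {c : ℝ} (hc : c ≠ 0)
    (hLij : ∀ y, L.symm y i = c * y j) (e : ℝ) : L '' boxFace r i e = boxFace s j (e / c) := by
  rw [image_boxFace_eq hL]
  ext y
  simp only [boxFace, Set.mem_ofPred_eq, hLij, eq_div_iff hc, mul_comm c]

section DecidableEq

variable [DecidableEq ι]

theorem single_mem_box {m : ι} {t : ℝ} (ht : t ∈ Set.Icc 0 (r m)) (hr : ∀ m, 0 ≤ r m) :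
    EuclideanSpace.single m t ∈ box r := by
  intro k
  rcases eq_or_ne k m with rfl | hk
  · simpa using ht
  · simpa [hk] using hr k

theorem mul_eq_of_symm_apply_eq_mul_apply (hL : L '' box r = box s) (hr : ∀ m, 0 ≤ r m)
    (hs : ∀ m, 0 ≤ s m) {i j : ι} {c : ℝ} (hc : 0 ≤ c) (hLij : ∀ y, L.symm y i = c * y j) :
    c * s j = r i := by
  apply le_antisymm
  · simpa [hLij] using
      (symm_mem_box_of_image_box_eq hL (single_mem_box ⟨hs j, le_rfl⟩ hs) i).2
  · have hx : L (EuclideanSpace.single i (r i)) ∈ box s :=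
      hL ▸ Set.mem_image_of_mem L (single_mem_box ⟨hr i, le_rfl⟩ hr)
    calc r i = c * L (EuclideanSpace.single i (r i)) j := by
          simpa using hLij (L (EuclideanSpace.single i (r i)))
      _ ≤ c * s j := mul_le_mul_of_nonneg_left (hx j).2 hc

end DecidableEq

variable [Fintype ι]

theorem volume_box (hr : ∀ m, 0 ≤ r m) : volume (box r) = ENNReal.ofReal (∏ m, r m) := by
  have : box r =
      (MeasurableEquiv.toLp 2 (ι → ℝ)).symm ⁻¹' Set.univ.pi fun m => Set.Icc 0 (r m) := by
    ext x
    simp only [box, Set.mem_ofPred_eq, Set.mem_preimage, Set.mem_univ_pi]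
    rfl
  rw [this, (EuclideanSpace.volume_preserving_symm_measurableEquiv_toLp ι).measure_preimage
    (MeasurableSet.univ_pi fun m => measurableSet_Icc).nullMeasurableSet, volume_pi_pi]
  simp_rw [Real.volume_Icc, sub_zero, ENNReal.ofReal_prod_of_nonneg fun m _ => hr m]

theorem abs_det_mul_prod_eq_prod_of_image_box_eq (hL : L '' box r = box s) (hr : ∀ m, 0 ≤ r m)
    (hs : ∀ m, 0 ≤ s m) :
    |LinearMap.det (L : EuclideanSpace ℝ ι →ₗ[ℝ] EuclideanSpace ℝ ι)| * ∏ m, r m = ∏ m, s m := by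
  have h := Measure.addHaar_image_linearMap volume
    (L : EuclideanSpace ℝ ι →ₗ[ℝ] EuclideanSpace ℝ ι) (box r)
  rw [LinearEquiv.coe_coe, hL, volume_box hr, volume_box hs,
    ← ENNReal.ofReal_mul (abs_nonneg _)] at h
  exact ((ENNReal.ofReal_eq_ofReal_iff
    (mul_nonneg (abs_nonneg _) (Finset.prod_nonneg fun m _ => hr m))
    (Finset.prod_nonneg fun m _ => hs m)).1 h.symm)

variable [DecidableEq ι]

theorem linearMap_apply_eq_sum (f : EuclideanSpace ℝ ι →ₗ[ℝ] ℝ) (y : EuclideanSpace ℝ ι) :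
    f y = ∑ m, y m * f (EuclideanSpace.single m 1) := by
  conv_lhs => rw [← (EuclideanSpace.basisFun ι ℝ).sum_repr y]
  simp [map_sum]

theorem linearMap_apply_single (f : EuclideanSpace ℝ ι →ₗ[ℝ] ℝ) (m : ι) (t : ℝ) :
    f (EuclideanSpace.single m t) = t * f (EuclideanSpace.single m 1) := by
  simp [linearMap_apply_eq_sum f (EuclideanSpace.single m t)]

theorem apply_eq_mul_of_forall_boxFace_eq (hr : ∀ m, 0 < r m) {i : ι} {e : ℝ}
    (he : e ∈ Set.Icc 0 (r i)) (f : EuclideanSpace ℝ ι →ₗ[ℝ] ℝ) {a : ℝ}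
    (hf : ∀ x ∈ boxFace r i e, f x = a) (x : EuclideanSpace ℝ ι) :
    f x = x i * f (EuclideanSpace.single i 1) := by
  have hp : EuclideanSpace.single i e ∈ boxFace r i e :=
    ⟨single_mem_box he fun k => (hr k).le, by simp⟩
  have hzero : ∀ m ≠ i, f (EuclideanSpace.single m 1) = 0 := by
    intro m hm
    have hq : EuclideanSpace.single i e + EuclideanSpace.single m (r m) ∈ boxFace r i e := by
      refine ⟨fun k => ?_, by simp [hm.symm]⟩
      rcases eq_or_ne k i with rfl | hki
      · simpa [hm.symm] using he
      rcases eq_or_ne k m with rfl | hkm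
      · simpa [hki] using (hr k).le
      · simpa [hki, hkm] using (hr k).le
    have h := (hf _ hq).trans (hf _ hp).symm
    rw [map_add, add_eq_left, linearMap_apply_single] at h
    simpa [(hr m).ne'] using h
  rw [linearMap_apply_eq_sum f]
  exact Finset.sum_eq_single i (fun m _ hm => by rw [hzero m hm, mul_zero]) (by simp)

theorem apply_eq_of_isMaxOn_box {φ : EuclideanSpace ℝ ι →ₗ[ℝ] ℝ} {y : EuclideanSpace ℝ ι}
    (hy : y ∈ box s) (hmax : IsMaxOn φ (box s) y) {a : ι}
    (ha : 0 < φ (EuclideanSpace.single a 1)) : y a = s a := by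
  have hy' : y + EuclideanSpace.single a (s a - y a) ∈ box s := by
    intro k
    rcases eq_or_ne k a with rfl | hk
    · simpa using (hy k).1.trans (hy k).2
    · simpa [hk] using hy k
  have h := isMaxOn_iff.1 hmax _ hy'
  rw [map_add, linearMap_apply_single, add_le_iff_nonpos_right] at h
  linarith [(hy a).2, nonpos_of_mul_nonpos_left h ha]

theorem exists_symm_apply_eq_mul_apply (hL : L '' box r = box s) (hr : ∀ m, 0 < r m)
    (hs : ∀ m, 0 < s m) (i : ι) : ∃ j, ∃ c > 0, ∀ y, L.symm y i = c * y j := by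
  set φ := EuclideanSpace.projₗ i ∘ₗ (L.symm : EuclideanSpace ℝ ι →ₗ[ℝ] EuclideanSpace ℝ ι)
  have hφ : ∀ y, φ y = L.symm y i := fun y => rfl
  obtain ⟨a, ha⟩ : ∃ a, φ (EuclideanSpace.single a 1) ≠ 0 := by
    by_contra! h
    simpa [h, hφ] using linearMap_apply_eq_sum φ (L (EuclideanSpace.single i 1))
  have ha_pos : 0 < φ (EuclideanSpace.single a 1) := by
    refine ha.symm.lt_of_le ?_
    have h := (symm_mem_box_of_image_box_eq hL
      (single_mem_box ⟨(hs a).le, le_rfl⟩ fun m => (hs m).le) i).1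
    rwa [← hφ, linearMap_apply_single, mul_nonneg_iff_of_pos_left (hs a)] at h
  have htop : ∀ x ∈ boxFace r i (r i), (EuclideanSpace.projₗ a ∘ₗ
      (L : EuclideanSpace ℝ ι →ₗ[ℝ] EuclideanSpace ℝ ι)) x = s a := by
    intro x hx
    refine apply_eq_of_isMaxOn_box (hL ▸ Set.mem_image_of_mem L hx.1) (isMaxOn_iff.2 ?_) ha_pos
    intro y hy
    simpa [hφ, hx.2] using (symm_mem_box_of_image_box_eq hL hy i).2
  set α := L (EuclideanSpace.single i 1) a
  have hya : ∀ y, y a = φ y * α := fun y => by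
    simpa [hφ, mul_comm] using
      apply_eq_mul_of_forall_boxFace_eq hr ⟨(hr i).le, le_rfl⟩ _ htop (L.symm y)
  have hα : φ (EuclideanSpace.single a 1) * α = 1 := by
    simpa using (hya (EuclideanSpace.single a 1)).symm
  refine ⟨a, φ (EuclideanSpace.single a 1), ha_pos, fun y => ?_⟩
  rw [← hφ, hya y, ← mul_assoc, mul_comm _ (φ y), mul_assoc, hα, mul_one]

end Box

theorem mul_le_of_symm_apply_eq_mul_apply {N : ℕ} {r s : Fin N → ℝ}
    {L : EuclideanSpace ℝ (Fin N) ≃ₗ[ℝ] EuclideanSpace ℝ (Fin N)} {σ c : ℝ} {i j : Fin N}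
    (hσ : 0 ≤ σ) (hLσ : ∀ x, σ * ‖x‖ ≤ ‖L x‖) (hLij : ∀ y, L.symm y i = c * y j)
    (hc : c * s j = r i) (hs : 0 ≤ s j) : σ * r i ≤ s j := by
  set x := L.symm (EuclideanSpace.single j (s j))
  have hxi : x i = r i := by simp [x, hLij, hc]
  calc σ * r i ≤ σ * ‖x‖ := by
        gcongr
        simpa [hxi] using (le_abs_self (x i)).trans (PiLp.norm_apply_le x i)
    _ ≤ ‖L x‖ := hLσ x
    _ = s j := by simp [x, abs_of_nonneg hs]

theorem prod_succAbove_le_mul_prod_succAbove {N : ℕ} {r s : Fin (N + 1) → ℝ} {d P : ℝ}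
    {i j : Fin (N + 1)} (hr : ∀ m, 0 ≤ r m) (hP : 0 ≤ P) (hsj : 0 < s j)
    (hvol : d * P * ∏ m, r m = ∏ m, s m) (hd : d * r i ≤ s j) :
    ∏ m, s (j.succAbove m) ≤ P * ∏ m, r (i.succAbove m) := by
  rw [Fin.prod_univ_succAbove _ i, Fin.prod_univ_succAbove _ j] at hvol
  have hR : 0 ≤ ∏ m, r (i.succAbove m) := Finset.prod_nonneg fun m _ => hr _
  refine le_of_mul_le_mul_left ?_ hsj
  calc s j * ∏ m, s (j.succAbove m) = (P * ∏ m, r (i.succAbove m)) * (d * r i) := by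
        rw [← hvol]; ring
    _ ≤ (P * ∏ m, r (i.succAbove m)) * s j := mul_le_mul_of_nonneg_left hd (mul_nonneg hP hR)
    _ = s j * (P * ∏ m, r (i.succAbove m)) := mul_comm _ _

theorem isometry_toLp_insertNth {N : ℕ} (i : Fin (N + 1)) (e : ℝ) :
    Isometry fun z : EuclideanSpace ℝ (Fin N) =>
      WithLp.toLp 2 (i.insertNth (α := fun _ => ℝ) e z.ofLp) := by
  refine Isometry.of_dist_eq fun z z' => ?_
  simp [EuclideanSpace.dist_eq, Fin.sum_univ_succAbove _ i]

theorem image_toLp_insertNth_box {N : ℕ} {r : Fin (N + 1) → ℝ} {i : Fin (N + 1)} {e : ℝ}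
    (he : e ∈ Set.Icc 0 (r i)) :
    (fun z : EuclideanSpace ℝ (Fin N) => WithLp.toLp 2 (i.insertNth (α := fun _ => ℝ) e z.ofLp)) ''
      box (fun m => r (i.succAbove m)) = boxFace r i e := by
  ext x
  constructor
  · rintro ⟨z, hz, rfl⟩
    exact ⟨i.forall_iff_succAbove.2 ⟨by simpa using he, fun m => by simpa using hz m⟩, by simp⟩
  · rintro ⟨hx, rfl⟩
    refine ⟨WithLp.toLp 2 fun m => x (i.succAbove m), fun m => hx _, ?_⟩
    ext k
    exact congrFun (Fin.insertNth_self_removeNth i x.ofLp) k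

theorem euclideanHausdorffMeasure_boxFace {N : ℕ} {r : Fin (N + 1) → ℝ} (hr : ∀ m, 0 ≤ r m)
    {i : Fin (N + 1)} {e : ℝ} (he : e ∈ Set.Icc 0 (r i)) :
    μHE[N] (boxFace r i e) = ENNReal.ofReal (∏ m, r (i.succAbove m)) := by
  rw [← image_toLp_insertNth_box he, (isometry_toLp_insertNth i e).euclideanHausdorffMeasure_image,
    EuclideanSpace.euclideanHausdorffMeasure_eq_volume, volume_box fun m => hr _]

theorem hausdorffMeasure_le_mul_of_euclideanHausdorffMeasure_le {X : Type*} [EMetricSpace X]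
    [MeasurableSpace X] [BorelSpace X] {d : ℕ} {A B : Set X} {k : ℝ≥0∞}
    (h : μHE[d] A ≤ k * μHE[d] B) : μH[d] A ≤ k * μH[d] B := by
  simp only [Measure.euclideanHausdorffMeasure_def, Measure.smul_apply, ENNReal.smul_def,
    smul_eq_mul, mul_left_comm k] at h
  exact (ENNReal.mul_le_mul_iff_right (by simpa using
    Measure.addHaarScalarFactor_volume_hausdorffMeasure_ne_zero d) coe_ne_top).1 h

theorem hausdorffMeasure_image_boxFace_le {N : ℕ} {r s : Fin (N + 1) → ℝ}
    {L : EuclideanSpace ℝ (Fin (N + 1)) ≃ₗ[ℝ] EuclideanSpace ℝ (Fin (N + 1))}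
    (hL : L '' box r = box s) (hr : ∀ m, 0 < r m) (hs : ∀ m, 0 < s m) {i j : Fin (N + 1)} {c : ℝ}
    (hc : 0 < c) (hLij : ∀ y, L.symm y i = c * y j) {d P : ℝ} (hP : 0 ≤ P)
    (hvol : d * P * ∏ m, r m = ∏ m, s m) (hd : d * r i ≤ s j) {e : ℝ} (he : e ∈ Set.Icc 0 (r i)) :
    μH[N] (L '' boxFace r i e) ≤ ENNReal.ofReal P * μH[N] (boxFace r i e) := by
  have hcj := mul_eq_of_symm_apply_eq_mul_apply hL (hr · |>.le) (hs · |>.le) hc.le hLij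
  have he' : e / c ∈ Set.Icc 0 (s j) :=
    ⟨div_nonneg he.1 hc.le, (div_le_iff₀ hc).2 (by linarith [he.2])⟩
  refine hausdorffMeasure_le_mul_of_euclideanHausdorffMeasure_le ?_
  rw [image_boxFace_eq_boxFace hL hc.ne' hLij, euclideanHausdorffMeasure_boxFace (hs · |>.le) he',
    euclideanHausdorffMeasure_boxFace (hr · |>.le) he, ← ENNReal.ofReal_mul hP]
  exact ENNReal.ofReal_le_ofReal <|
    prod_succAbove_le_mul_prod_succAbove (hr · |>.le) hP (hs j) hvol hd

theorem width_volume_stmt7_general {n : ℕ}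
    (Rs Ss : Fin n → ℝ) (hRpos : ∀ i, 0 < Rs i) (hSpos : ∀ i, 0 < Ss i)
    (L : EuclideanSpace ℝ (Fin n) ≃ₗ[ℝ] EuclideanSpace ℝ (Fin n))
    (hL : L '' {x : EuclideanSpace ℝ (Fin n) | ∀ i, x i ∈ Set.Icc 0 (Rs i)} =
        {x : EuclideanSpace ℝ (Fin n) | ∀ i, x i ∈ Set.Icc 0 (Ss i)})
    (s : Fin n → ℝ) (hs0 : ∀ i, 0 ≤ s i) (hsmono : Monotone s)
    (v w : Fin n → EuclideanSpace ℝ (Fin n)) (hv : Orthonormal ℝ v) (hw : Orthonormal ℝ w)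
    (hsvd : ∀ i, L (v i) = s i • w i) :
    ∀ i : Fin n, ∀ e ∈ ({0, Rs i} : Set ℝ),
      (∃ j : Fin n, ∃ e' ∈ ({0, Ss j} : Set ℝ),
        L '' {x : EuclideanSpace ℝ (Fin n) | (∀ m, x m ∈ Set.Icc 0 (Rs m)) ∧ x i = e} =
          {x : EuclideanSpace ℝ (Fin n) | (∀ m, x m ∈ Set.Icc 0 (Ss m)) ∧ x j = e'}) ∧
      μH[(n : ℝ) - 1]
          (L '' {x : EuclideanSpace ℝ (Fin n) | (∀ m, x m ∈ Set.Icc 0 (Rs m)) ∧ x i = e}) ≤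
        ENNReal.ofReal (∏ j ∈ Finset.univ.filter (fun j : Fin n => 1 ≤ (j : ℕ)), s j) *
          μH[(n : ℝ) - 1]
            {x : EuclideanSpace ℝ (Fin n) | (∀ m, x m ∈ Set.Icc 0 (Rs m)) ∧ x i = e} := by
  rcases n with _ | N
  · exact fun i => i.elim0
  obtain ⟨v, rfl⟩ := hv.exists_orthonormalBasis_coe_eq (by simp)
  obtain ⟨w, rfl⟩ := hw.exists_orthonormalBasis_coe_eq (by simp)
  intro i e he
  obtain ⟨j, c, hc, hLij⟩ := exists_symm_apply_eq_mul_apply hL hRpos hSpos i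
  have hcj : c * Ss j = Rs i :=
    mul_eq_of_symm_apply_eq_mul_apply hL (hRpos · |>.le) (hSpos · |>.le) hc.le hLij
  refine ⟨⟨j, e / c, ?_, image_boxFace_eq_boxFace hL hc.ne' hLij e⟩, ?_⟩
  · rcases he with rfl | rfl
    · simp
    · simp [← hcj, hc.ne']
  set P := ∏ j ∈ Finset.univ.filter (fun j : Fin (N + 1) => 1 ≤ (j : ℕ)), s j
  have hvol : s 0 * P * ∏ m, Rs m = ∏ m, Ss m := by
    rw [← abs_det_mul_prod_eq_prod_of_image_box_eq hL (hRpos · |>.le) (hSpos · |>.le),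
      abs_det_eq_prod_abs_of_apply_eq_smul _ v w hsvd]
    simp [P, Finset.prod_filter, Fin.prod_univ_succ, abs_of_nonneg (hs0 _)]
  have hsmall : s 0 * Rs i ≤ Ss j :=
    mul_le_of_symm_apply_eq_mul_apply (hs0 0)
      (mul_norm_le_norm_apply_of_apply_eq_smul _ v w.orthonormal hsvd
        (fun m => (hsmono (Fin.zero_le m)).trans (le_abs_self _)) (hs0 0)) hLij hcj (hSpos j).le
  have he' : e ∈ Set.Icc 0 (Rs i) := by rcases he with rfl | rfl <;> simp [(hRpos i).le]
  rw [Nat.cast_succ, add_sub_cancel_right]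
  exact hausdorffMeasure_image_boxFace_le hL hRpos hSpos hc hLij
    (Finset.prod_nonneg fun m _ => hs0 m) hvol hsmall he'

/-- A linear diffeomorphism `L` taking the rectangle `R = ∏ [0, Rᵢ]` onto `S = ∏ [0, Sᵢ]`
maps each hyperface of `R` onto a hyperface of `S`, and its `(n-1)`-dilation (the product
`s₂ ⋯ s_n` of its `n-1` largest singular values, given here by an SVD of `L`) is at least
the ratio of the `(n-1)`-dimensional area of the image face to that of the face. -/
theorem width_volume_stmt7 {n : ℕ} (hn : 2 ≤ n)
    (Rs Ss : Fin n → ℝ) (hRpos : ∀ i, 0 < Rs i) (hSpos : ∀ i, 0 < Ss i)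
    (hRmono : Monotone Rs) (hSmono : Monotone Ss)
    (L : EuclideanSpace ℝ (Fin n) ≃ₗ[ℝ] EuclideanSpace ℝ (Fin n))
    (hL : L '' {x : EuclideanSpace ℝ (Fin n) | ∀ i, x i ∈ Set.Icc 0 (Rs i)} =
        {x : EuclideanSpace ℝ (Fin n) | ∀ i, x i ∈ Set.Icc 0 (Ss i)})
    (s : Fin n → ℝ) (hs0 : ∀ i, 0 ≤ s i) (hsmono : Monotone s)
    (v w : Fin n → EuclideanSpace ℝ (Fin n)) (hv : Orthonormal ℝ v) (hw : Orthonormal ℝ w)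
    (hsvd : ∀ i, L (v i) = s i • w i) :
    ∀ i : Fin n, ∀ e ∈ ({0, Rs i} : Set ℝ),
      (∃ j : Fin n, ∃ e' ∈ ({0, Ss j} : Set ℝ),
        L '' {x : EuclideanSpace ℝ (Fin n) | (∀ m, x m ∈ Set.Icc 0 (Rs m)) ∧ x i = e} =
          {x : EuclideanSpace ℝ (Fin n) | (∀ m, x m ∈ Set.Icc 0 (Ss m)) ∧ x j = e'}) ∧
      μH[(n : ℝ) - 1]
          (L '' {x : EuclideanSpace ℝ (Fin n) | (∀ m, x m ∈ Set.Icc 0 (Rs m)) ∧ x i = e}) ≤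
        ENNReal.ofReal (∏ j ∈ Finset.univ.filter (fun j : Fin n => 1 ≤ (j : ℕ)), s j) *
          μH[(n : ℝ) - 1]
            {x : EuclideanSpace ℝ (Fin n) | (∀ m, x m ∈ Set.Icc 0 (Rs m)) ∧ x i = e} :=
  width_volume_stmt7_general Rs Ss hRpos hSpos L hL s hs0 hsmono v w hv hw hsvd
end
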